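/- arXiv:2005.07755 — 4 statements merged into one kernel-verified Lean document; each statement's English description precedes it below -/
import Mathlib

section
/- For all positive integers t and T with 1 ≤ t ≤ T-1, the sum ∑_{s=t}^{T-1} 1/(s(s+1)(s+2)^2) is at most 1/(4t(t+1)). -/
/-! Telescoping: `1 / (s (s+1) (s+2)²) ≤ 1 / (2 s (s+1) (s+2)) = g s - g (s+1)` with
`g s = 1 / (4 s (s+1))`, so the sum from `t` on is at most `g t`. -/

open Finset

lemma one_div_mul_mul_sq_le_sub {x : ℝ} (hx : 0 < x) :
    1 / (x * (x + 1) * (x + 2) ^ 2) ≤ 1 / (4 * x * (x + 1)) - 1 / (4 * (x + 1) * (x + 2)) := by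
  have hdiff : 1 / (4 * x * (x + 1)) - 1 / (4 * (x + 1) * (x + 2))
      = 1 / (2 * x * (x + 1) * (x + 2)) := by
    field_simp
    ring
  rw [hdiff, one_div_le_one_div (by positivity) (by positivity)]
  nlinarith [mul_pos (mul_pos hx (by linarith : (0 : ℝ) < x + 1)) (by linarith : (0 : ℝ) < x + 2)]

lemma sum_Icc_one_div_mul_mul_sq_le {t n : ℕ} (ht : 1 ≤ t) (htn : t ≤ n) :
    ∑ s ∈ Icc t n, (1 : ℝ) / ((s : ℝ) * ((s : ℝ) + 1) * ((s : ℝ) + 2) ^ 2)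
      ≤ 1 / (4 * (t : ℝ) * ((t : ℝ) + 1)) - 1 / (4 * ((n + 1 : ℕ) : ℝ) * ((n + 1 : ℕ) + 1)) := by
  set g : ℕ → ℝ := fun s ↦ 1 / (4 * (s : ℝ) * ((s : ℝ) + 1))
  have hterm : ∀ s ∈ Icc t n,
      (1 : ℝ) / ((s : ℝ) * ((s : ℝ) + 1) * ((s : ℝ) + 2) ^ 2) ≤ -(g (s + 1) - g s) := by
    intro s hs
    have hs_pos : (0 : ℝ) < s := by
      exact_mod_cast (ht.trans (mem_Icc.mp hs).1 : 0 < s)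
    simpa [g, add_assoc, one_add_one_eq_two] using one_div_mul_mul_sq_le_sub hs_pos
  calc _ ≤ ∑ s ∈ Icc t n, -(g (s + 1) - g s) := sum_le_sum hterm
    _ = g t - g (n + 1) := by rw [sum_neg_distrib, sum_Icc_sub htn, neg_sub]

theorem sum_inv_cubic_bound_general (t T : ℕ) (ht : 1 ≤ t) :
    ∑ s ∈ Finset.Icc t (T - 1),
        (1 : ℝ) / ((s : ℝ) * ((s : ℝ) + 1) * ((s : ℝ) + 2) ^ 2)
      ≤ 1 / (4 * (t : ℝ) * ((t : ℝ) + 1)) := by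
  rcases le_or_gt t (T - 1) with htT | hTt
  · exact (sum_Icc_one_div_mul_mul_sq_le ht htT).trans (sub_le_self _ (by positivity))
  · rw [Icc_eq_empty_of_lt hTt, sum_empty]
    positivity

theorem sum_inv_cubic_bound (t T : ℕ) (ht : 1 ≤ t) (htT : t ≤ T - 1) :
    ∑ s ∈ Finset.Icc t (T - 1),
        (1 : ℝ) / ((s : ℝ) * ((s : ℝ) + 1) * ((s : ℝ) + 2) ^ 2)
      ≤ 1 / (4 * (t : ℝ) * ((t : ℝ) + 1)) :=
  sum_inv_cubic_bound_general t T ht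
end

section
/- Let sequences x_t, y_t, z_t in ℝ^d satisfy y_0 = x_0 and the recursions z_t = (1 - α_{t+1}) y_t + α_{t+1} x_t, y_{t+1} = z_t + (β/λ_t)(x_{t+1} - x_t), with α_t = 2/(t+1). Then for all t ≥ 0, y_t - x_t = -Γ_t ∑_{s=1}^{t} ((λ_{s-1} - β)/(Γ_s λ_{s-1})) (x_s - x_{s-1}), where Γ_t = 2/(t(t+1)) and the empty sum at t = 0 is zero. -/
/-!
The gap `e t = y t - x t` satisfies the first-order linear recursion
`e (t + 1) = (1 - α (t + 1)) • e t + (β / lam t - 1) • (x (t + 1) - x t)` with `e 0 = 0`,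
and `Γ` is a product of the factors `1 - α (t + 1)` (from `t = 1` on), so the discrete
variation-of-constants formula solves the recursion in closed form.
-/

open Finset

/-- Discrete variation of constants. -/
theorem eq_smul_sum_of_succ_eq_smul_add {K V : Type*} [Field K] [AddCommGroup V] [Module K V]
    (e v : ℕ → V) (ρ Γ : ℕ → K) (he : e 0 = 0) (hsucc : ∀ t, e (t + 1) = ρ t • e t + v t)
    (hΓ : ∀ t, 0 < t → Γ (t + 1) = ρ t * Γ t) (hΓ0 : ∀ t, 0 < t → Γ t ≠ 0) :
    ∀ t, e t = Γ t • ∑ s ∈ Icc 1 t, (Γ s)⁻¹ • v (s - 1) := by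
  intro t
  induction t with
  | zero => simp [he]
  | succ t ih =>
    have hscale : Γ (t + 1) • ∑ s ∈ Icc 1 t, (Γ s)⁻¹ • v (s - 1) = ρ t • e t := by
      rcases Nat.eq_zero_or_pos t with rfl | ht
      · simp [he]
      · rw [ih, hΓ t ht, smul_smul]
    rw [sum_Icc_succ_top (Nat.le_add_left 1 t), smul_add, hscale, smul_smul,
      mul_inv_cancel₀ (hΓ0 _ t.succ_pos), one_smul, hsucc, Nat.add_sub_cancel]

theorem one_sub_two_div_mul_two_div {t : ℝ} (ht : t ≠ 0) (ht1 : t + 1 ≠ 0) (ht2 : t + 1 + 1 ≠ 0) :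
    (1 - 2 / (t + 1 + 1)) * (2 / (t * (t + 1))) = 2 / ((t + 1) * (t + 1 + 1)) := by
  field_simp
  ring

theorem momentum_diff_formula_diminishing_general {d : ℕ}
    (x y z : ℕ → EuclideanSpace ℝ (Fin d))
    (β : ℝ) (lam : ℕ → ℝ) (hlam : ∀ t, 0 < lam t)
    (α : ℕ → ℝ) (hα : ∀ t, α t = 2 / ((t : ℝ) + 1))
    (Γ : ℕ → ℝ) (hΓ : ∀ t, Γ t = 2 / ((t : ℝ) * ((t : ℝ) + 1)))
    (h0 : y 0 = x 0)
    (hz : ∀ t, z t = (1 - α (t + 1)) • y t + α (t + 1) • x t)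
    (hy : ∀ t, y (t + 1) = z t + (β / lam t) • (x (t + 1) - x t)) :
    ∀ t, y t - x t =
      -(Γ t • ∑ s ∈ Finset.Icc 1 t,
          ((lam (s - 1) - β) / (Γ s * lam (s - 1))) • (x s - x (s - 1))) := by
  have hsucc : ∀ t, y (t + 1) - x (t + 1) =
      (1 - α (t + 1)) • (y t - x t) + (β / lam t - 1) • (x (t + 1) - x t) := by
    intro t
    rw [hy, hz]
    module
  have hΓsucc : ∀ t, 0 < t → Γ (t + 1) = (1 - α (t + 1)) * Γ t := by
    intro t ht
    have ht' : (0 : ℝ) < t := by exact_mod_cast ht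
    rw [hα, hΓ, hΓ]
    push_cast
    exact (one_sub_two_div_mul_two_div ht'.ne' (by positivity) (by positivity)).symm
  have hΓ0 : ∀ t, 0 < t → Γ t ≠ 0 := by
    intro t ht
    have ht' : (0 : ℝ) < t := by exact_mod_cast ht
    rw [hΓ]
    positivity
  intro t
  rw [eq_smul_sum_of_succ_eq_smul_add (fun t ↦ y t - x t) _ _ Γ (by simp [h0]) hsucc hΓsucc hΓ0,
    ← smul_neg, ← sum_neg_distrib]
  refine congrArg (Γ t • ·) (sum_congr rfl fun s hs ↦ ?_)
  rw [Nat.sub_add_cancel (mem_Icc.mp hs).1, smul_smul, ← neg_smul]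
  congr 1
  field_simp [(hlam (s - 1)).ne']
  ring

theorem momentum_diff_formula_diminishing {d : ℕ}
    (x y z : ℕ → EuclideanSpace ℝ (Fin d))
    (β : ℝ) (hβ : 0 < β) (lam : ℕ → ℝ) (hlam : ∀ t, 0 < lam t)
    (α : ℕ → ℝ) (hα : ∀ t, α t = 2 / ((t : ℝ) + 1))
    (Γ : ℕ → ℝ) (hΓ : ∀ t, Γ t = 2 / ((t : ℝ) * ((t : ℝ) + 1)))
    (h0 : y 0 = x 0)
    (hz : ∀ t, z t = (1 - α (t + 1)) • y t + α (t + 1) • x t)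
    (hy : ∀ t, y (t + 1) = z t + (β / lam t) • (x (t + 1) - x t)) :
    ∀ t, y t - x t =
      -(Γ t • ∑ s ∈ Finset.Icc 1 t,
          ((lam (s - 1) - β) / (Γ s * lam (s - 1))) • (x s - x (s - 1))) :=
  momentum_diff_formula_diminishing_general x y z β lam hlam α hα Γ hΓ h0 hz hy
end

section
/- Under the setup of the momentum recursion with diminishing momentum α_t = 2/(t+1), the iterates satisfy ‖y_t - x_t‖² ≤ Γ_t ∑_{s=1}^{t} ((λ_{s-1} - β)²/(α_s Γ_s λ_{s-1}²)) ‖x_s - x_{s-1}‖², where Γ_t = 2/(t(t+1)). -/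
/-!
The error `e t = y t - x t` satisfies the linear recursion `e (t+1) = (1 - α (t+1)) • e t + u (t+1)`
with `e 0 = 0` and `u s = -((λ (s-1) - β) / λ (s-1)) • (x s - x (s-1))`. Since
`(1 - α (t+1)) Γ t = Γ (t+1)`, it unrolls to `e t = ∑ s ≤ t, (Γ t / Γ s) • u s`. The weights
`Γ t α s / Γ s = Γ t s` sum to one (Gauss), and Jensen's inequality for `‖·‖²` with these weights
is the bound.
-/

open Finset

lemma norm_sum_sq_le_sum_norm_sq_div {ι E : Type*} [SeminormedAddCommGroup E]
    (S : Finset ι) (v : ι → E) (w : ι → ℝ) (hw : ∀ i ∈ S, 0 < w i)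
    (hw_sum : ∑ i ∈ S, w i = 1) :
    ‖∑ i ∈ S, v i‖ ^ 2 ≤ ∑ i ∈ S, ‖v i‖ ^ 2 / w i :=
  calc ‖∑ i ∈ S, v i‖ ^ 2 ≤ (∑ i ∈ S, ‖v i‖) ^ 2 := by gcongr; exact norm_sum_le _ _
    _ = (∑ i ∈ S, ‖v i‖) ^ 2 / ∑ i ∈ S, w i := by rw [hw_sum, div_one]
    _ ≤ ∑ i ∈ S, ‖v i‖ ^ 2 / w i := sq_sum_div_le_sum_sq_div S _ hw

/-- Discrete variation of constants: `Γ` is a fundamental solution of `g (t+1) = a t * g t`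
from `t = 1` on; nothing is asked at `t = 0` because `e 0 = 0`. -/
lemma eq_smul_sum_inv_smul_of_succ_eq_smul_add {E : Type*} [AddCommGroup E] [Module ℝ E]
    (e u : ℕ → E) (a Γ : ℕ → ℝ) (he0 : e 0 = 0) (hΓ : ∀ t, Γ (t + 1) ≠ 0)
    (ha : ∀ t, 1 ≤ t → a t * Γ t = Γ (t + 1)) (he : ∀ t, e (t + 1) = a t • e t + u (t + 1)) :
    ∀ t, e t = Γ t • ∑ s ∈ Icc 1 t, (Γ s)⁻¹ • u s := by
  intro t
  induction t with
  | zero => simp [he0]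
  | succ t ih =>
    rw [he, sum_Icc_succ_top (by omega), smul_add, smul_smul, mul_inv_cancel₀ (hΓ t), one_smul]
    rcases Nat.eq_zero_or_pos t with rfl | ht
    · simp [he0]
    · rw [ih, smul_smul, ha t ht]

lemma sum_Icc_natCast (n : ℕ) : ∑ i ∈ Icc 1 n, (i : ℝ) = n * (n + 1) / 2 := by
  induction n with
  | zero => simp
  | succ n ih =>
    rw [sum_Icc_succ_top (by omega), ih]
    push_cast
    ring

namespace DiminishingMomentum

variable {α Γ : ℕ → ℝ}

lemma α_pos (hα : ∀ t, α t = 2 / ((t : ℝ) + 1)) (t : ℕ) : 0 < α t := by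
  rw [hα]; positivity

lemma Γ_pos (hΓ : ∀ t, Γ t = 2 / ((t : ℝ) * ((t : ℝ) + 1))) {t : ℕ} (ht : 1 ≤ t) : 0 < Γ t := by
  have : (0 : ℝ) < t := by exact_mod_cast ht
  rw [hΓ]; positivity

lemma one_sub_α_succ_mul_Γ (hα : ∀ t, α t = 2 / ((t : ℝ) + 1)) (hΓ : ∀ t, Γ t = 2 / ((t : ℝ) * ((t : ℝ) + 1))) {t : ℕ}
    (ht : 1 ≤ t) : (1 - α (t + 1)) * Γ t = Γ (t + 1) := by
  have : (0 : ℝ) < t := by exact_mod_cast ht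
  rw [hα, hΓ, hΓ]
  push_cast
  field_simp
  ring

lemma sum_Γ_mul_α_div_Γ (hα : ∀ t, α t = 2 / ((t : ℝ) + 1)) (hΓ : ∀ t, Γ t = 2 / ((t : ℝ) * ((t : ℝ) + 1))) {t : ℕ}
    (ht : 1 ≤ t) : ∑ s ∈ Icc 1 t, Γ t * α s / Γ s = 1 := by
  have hs : ∀ s ∈ Icc 1 t, Γ t * α s / Γ s = Γ t * s := by
    intro s hs
    have : (0 : ℝ) < s := by exact_mod_cast (mem_Icc.mp hs).1
    rw [hα, hΓ s]
    field_simp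
  have : (0 : ℝ) < t := by exact_mod_cast ht
  rw [sum_congr rfl hs, ← mul_sum, sum_Icc_natCast, hΓ]
  field_simp

end DiminishingMomentum

open DiminishingMomentum in
theorem momentum_diff_bound_diminishing_general {d : ℕ}
    (x y z : ℕ → EuclideanSpace ℝ (Fin d))
    (β : ℝ) (lam : ℕ → ℝ) (hlam : ∀ t, 0 < lam t)
    (α : ℕ → ℝ) (hα : ∀ t, α t = 2 / ((t : ℝ) + 1))
    (Γ : ℕ → ℝ) (hΓ : ∀ t, Γ t = 2 / ((t : ℝ) * ((t : ℝ) + 1)))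
    (h0 : y 0 = x 0)
    (hz : ∀ t, z t = (1 - α (t + 1)) • y t + α (t + 1) • x t)
    (hy : ∀ t, y (t + 1) = z t + (β / lam t) • (x (t + 1) - x t)) :
    ∀ t, ‖y t - x t‖ ^ 2 ≤
      Γ t * ∑ s ∈ Finset.Icc 1 t,
        (lam (s - 1) - β) ^ 2 / (α s * Γ s * lam (s - 1) ^ 2) * ‖x s - x (s - 1)‖ ^ 2 := by
  intro t
  set u : ℕ → EuclideanSpace ℝ (Fin d) :=
    fun s => -(((lam (s - 1) - β) / lam (s - 1)) • (x s - x (s - 1))) with hu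
  have hclosed : y t - x t = Γ t • ∑ s ∈ Icc 1 t, (Γ s)⁻¹ • u s := by
    refine eq_smul_sum_inv_smul_of_succ_eq_smul_add (fun t => y t - x t) u (fun t => 1 - α (t + 1))
      Γ (by simp [h0]) (fun t => (Γ_pos hΓ (by omega)).ne')
      (fun t ht => one_sub_α_succ_mul_Γ hα hΓ ht) (fun t => ?_) t
    simp only [hu, hy, hz, Nat.add_sub_cancel, sub_div, div_self (hlam t).ne']
    module
  rcases Nat.eq_zero_or_pos t with rfl | ht
  · simp [h0]
  rw [hclosed, smul_sum]
  refine (norm_sum_sq_le_sum_norm_sq_div _ _ (fun s => Γ t * α s / Γ s)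
    (fun s hs => ?_) (sum_Γ_mul_α_div_Γ hα hΓ ht)).trans_eq ?_
  · have := Γ_pos hΓ (mem_Icc.mp hs).1
    have := α_pos hα s
    have := Γ_pos hΓ ht
    positivity
  rw [mul_sum]
  refine sum_congr rfl fun s hs => ?_
  have := (Γ_pos hΓ ht).ne'
  have := (α_pos hα s).ne'
  have := (Γ_pos hΓ (mem_Icc.mp hs).1).ne'
  have := (hlam (s - 1)).ne'
  simp only [hu, smul_smul, norm_smul, norm_neg, mul_pow, Real.norm_eq_abs, sq_abs]
  field_simp

theorem momentum_diff_bound_diminishing {d : ℕ}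
    (x y z : ℕ → EuclideanSpace ℝ (Fin d))
    (β : ℝ) (hβ : 0 < β) (lam : ℕ → ℝ) (hlam : ∀ t, 0 < lam t)
    (α : ℕ → ℝ) (hα : ∀ t, α t = 2 / ((t : ℝ) + 1))
    (Γ : ℕ → ℝ) (hΓ : ∀ t, Γ t = 2 / ((t : ℝ) * ((t : ℝ) + 1)))
    (h0 : y 0 = x 0)
    (hz : ∀ t, z t = (1 - α (t + 1)) • y t + α (t + 1) • x t)
    (hy : ∀ t, y (t + 1) = z t + (β / lam t) • (x (t + 1) - x t)) :
    ∀ t, ‖y t - x t‖ ^ 2 ≤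
      Γ t * ∑ s ∈ Finset.Icc 1 t,
        (lam (s - 1) - β) ^ 2 / (α s * Γ s * lam (s - 1) ^ 2) * ‖x s - x (s - 1)‖ ^ 2 :=
  momentum_diff_bound_diminishing_general x y z β lam hlam α hα Γ hΓ h0 hz hy
end

section
/- Under the constant-momentum recursion with α ∈ (0,1], the iterates satisfy ‖y_t - x_t‖² ≤ (t/(t+1)) ∑_{s=1}^{t} (1-α)^{2(t-s)} (t-s+1)(t-s+2) ((β - λ_{s-1})²/λ_{s-1}²) ‖x_s - x_{s-1}‖². -/
/-!
The error `e t = y t - x t` obeys the linear recursion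
`e (t + 1) = (1 - α) • e t + ((β - λ_t) / λ_t) • (x (t + 1) - x t)` with `e 0 = 0`, so it is the
sum over `s ≤ t` of the forcing terms damped by `(1 - α) ^ (t - s)`. The triangle inequality and the
Cauchy–Schwarz inequality with weights `1 / ((t - s + 1) (t - s + 2))` then give the bound; these
weights telescope to `t / (t + 1)`.
-/

open Finset

theorem eq_sum_pow_smul_of_eq_smul_add {R M : Type*} [Semiring R] [AddCommMonoid M] [Module R M]
    {e g : ℕ → M} {c : R} (h0 : e 0 = 0) (hsucc : ∀ n, e (n + 1) = c • e n + g (n + 1))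
    (t : ℕ) : e t = ∑ s ∈ Icc 1 t, c ^ (t - s) • g s := by
  induction t with
  | zero => simp [h0]
  | succ n ih =>
    rw [hsucc, ih, sum_Icc_succ_top (by omega), smul_sum, Nat.sub_self, pow_zero, one_smul]
    congr 1
    refine sum_congr rfl fun s hs => ?_
    rw [smul_smul, ← pow_succ', Nat.sub_add_comm (mem_Icc.mp hs).2]

theorem sum_range_one_div_succ_mul_succ_succ (t : ℕ) :
    ∑ k ∈ range t, 1 / (((k : ℝ) + 1) * ((k : ℝ) + 2)) = t / (t + 1) := by
  induction t with
  | zero => simp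
  | succ n ih =>
    rw [sum_range_succ, ih]
    push_cast
    field_simp
    ring

theorem sum_Icc_one_div_sub_succ_mul_sub_succ_succ (t : ℕ) :
    ∑ s ∈ Icc 1 t, 1 / ((((t - s : ℕ) : ℝ) + 1) * (((t - s : ℕ) : ℝ) + 2)) = t / (t + 1) := by
  rw [← Finset.Ico_add_one_right_eq_Icc, sum_Ico_reflect (fun k => 1 / (((k : ℝ) + 1) * ((k : ℝ) + 2))) 1
    le_rfl, Nat.sub_self, Nat.add_sub_cancel, Nat.Ico_zero_eq_range,
    sum_range_one_div_succ_mul_succ_succ]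

theorem norm_sum_sq_le_sum_mul_sum_norm_sq_div {ι E : Type*} [SeminormedAddCommGroup E]
    (s : Finset ι) (v : ι → E) {w : ι → ℝ} (hw : ∀ i ∈ s, 0 < w i) :
    ‖∑ i ∈ s, v i‖ ^ 2 ≤ (∑ i ∈ s, w i) * ∑ i ∈ s, ‖v i‖ ^ 2 / w i := by
  calc ‖∑ i ∈ s, v i‖ ^ 2 ≤ (∑ i ∈ s, ‖v i‖) ^ 2 := by gcongr; exact norm_sum_le s v
    _ ≤ (∑ i ∈ s, w i) * ∑ i ∈ s, ‖v i‖ ^ 2 / w i :=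
      sum_sq_le_sum_mul_sum_of_sq_le_mul s (fun i hi => (hw i hi).le)
        (fun i hi => div_nonneg (sq_nonneg _) (hw i hi).le)
        (fun i hi => (mul_div_cancel₀ _ (hw i hi).ne').ge)

theorem momentum_sub_succ {E : Type*} [AddCommGroup E] [Module ℝ E] {x y z : ℕ → E} {α β : ℝ}
    {lam : ℕ → ℝ} {n : ℕ} (hlam : lam n ≠ 0) (hz : z n = (1 - α) • y n + α • x n)
    (hy : y (n + 1) = z n + (β / lam n) • (x (n + 1) - x n)) :
    y (n + 1) - x (n + 1) = (1 - α) • (y n - x n) + ((β - lam n) / lam n) • (x (n + 1) - x n) := by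
  rw [hy, hz, sub_div, div_self hlam]
  module

theorem momentum_diff_bound_constant_general {d : ℕ}
    (x y z : ℕ → EuclideanSpace ℝ (Fin d))
    (α : ℝ)
    (β : ℝ) (lam : ℕ → ℝ) (hlam : ∀ t, 0 < lam t)
    (h0 : y 0 = x 0)
    (hz : ∀ t, z t = (1 - α) • y t + α • x t)
    (hy : ∀ t, y (t + 1) = z t + (β / lam t) • (x (t + 1) - x t)) :
    ∀ t, ‖y t - x t‖ ^ 2 ≤
      (t : ℝ) / ((t : ℝ) + 1) * ∑ s ∈ Finset.Icc 1 t,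
        (1 - α) ^ (2 * (t - s)) * (((t - s : ℕ) : ℝ) + 1) * (((t - s : ℕ) : ℝ) + 2) *
          ((β - lam (s - 1)) ^ 2 / lam (s - 1) ^ 2) * ‖x s - x (s - 1)‖ ^ 2 := by
  intro t
  have hexplicit := eq_sum_pow_smul_of_eq_smul_add (e := fun n => y n - x n)
    (g := fun s => ((β - lam (s - 1)) / lam (s - 1)) • (x s - x (s - 1))) (by simp [h0])
    (fun n => momentum_sub_succ (hlam n).ne' (hz n) (hy n)) t
  rw [hexplicit, ← sum_Icc_one_div_sub_succ_mul_sub_succ_succ t]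
  refine (norm_sum_sq_le_sum_mul_sum_norm_sq_div _ _
    (w := fun s => 1 / ((((t - s : ℕ) : ℝ) + 1) * (((t - s : ℕ) : ℝ) + 2)))
    fun s _ => by positivity).trans_eq ?_
  congr 1
  refine sum_congr rfl fun s _ => ?_
  rw [norm_smul, norm_smul, mul_pow, mul_pow, Real.norm_eq_abs, Real.norm_eq_abs, sq_abs, sq_abs,
    ← pow_mul, div_pow]
  field_simp
  ring

theorem momentum_diff_bound_constant {d : ℕ}
    (x y z : ℕ → EuclideanSpace ℝ (Fin d))
    (α : ℝ) (hα0 : 0 < α) (hα1 : α ≤ 1)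
    (β : ℝ) (hβ : 0 < β) (lam : ℕ → ℝ) (hlam : ∀ t, 0 < lam t)
    (h0 : y 0 = x 0)
    (hz : ∀ t, z t = (1 - α) • y t + α • x t)
    (hy : ∀ t, y (t + 1) = z t + (β / lam t) • (x (t + 1) - x t)) :
    ∀ t, ‖y t - x t‖ ^ 2 ≤
      (t : ℝ) / ((t : ℝ) + 1) * ∑ s ∈ Finset.Icc 1 t,
        (1 - α) ^ (2 * (t - s)) * (((t - s : ℕ) : ℝ) + 1) * (((t - s : ℕ) : ℝ) + 2) *
          ((β - lam (s - 1)) ^ 2 / lam (s - 1) ^ 2) * ‖x s - x (s - 1)‖ ^ 2 :=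
  momentum_diff_bound_constant_general x y z α β lam hlam h0 hz hy
end
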